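/- Every positive-ended path of a net of designs R belongs to the shuffle closure of R: if p is a positive-ended path all of whose views ⌜q⌝ (for prefixes q of p) are chronicles of R, then p lies in the shuffle closure R⧢ of the chronicles of R. -/

import Mathlib

namespace Ludics

abbrev Address := List ℕ

/-- An action of Ludics: the daimon, or a proper action given by a polarity
(`true` = positive), a focus address and a ramification. -/
inductive Action where
  | daimon : Action
  | proper (pos : Bool) (focus : Address) (ram : Finset ℕ) : Action
deriving DecidableEq

namespace Action

def isPositive : Action → Bool
  | daimon => true
  | proper pos _ _ => pos

def focus? : Action → Option Address
  | daimon => none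
  | proper _ ξ _ => some ξ

/-- Reverse the polarity of an action. -/
def dual : Action → Action
  | daimon => daimon
  | proper pos ξ I => proper (!pos) ξ I

/-- `a.justifiesB b` : the focus of `b` is one of the addresses created by `a`. -/
def justifiesB : Action → Action → Bool
  | proper _ ξ I, proper _ ζ _ => decide (∃ i ∈ I, ζ = ξ ++ [i])
  | _, _ => false

def justifies (a b : Action) : Prop := a.justifiesB b = true

end Action

/-- A sequent of a base: an optional left address (at most one) and a finite
set of right addresses. -/
structure Sequent where
  left : Option Address
  right : Finset Address

abbrev Base := List Sequent

def Base.isPositive (β : Base) : Prop := ∃ σ ∈ β, σ.left = none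

/-- An action is initial w.r.t. a base if its focus belongs to the base
(on the side corresponding to its polarity). -/
def Initial (β : Base) (a : Action) : Prop :=
  ∃ pol ξ I, a = .proper pol ξ I ∧
    ∃ σ ∈ β, (pol = true ∧ ξ ∈ σ.right) ∨ (pol = false ∧ σ.left = some ξ)

/-- A sequent "owns" an action when its focus is hereditarily justified by an
address of the sequent (i.e. extends an address of the sequent). -/
def Sequent.owns (σ : Sequent) (a : Action) : Prop :=
  ∃ ξ, a.focus? = some ξ ∧
    ((∃ γ, σ.left = some γ ∧ γ <+: ξ) ∨ (∃ δ ∈ σ.right, δ <+: ξ))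

def Sequent.addresses (σ : Sequent) : Set Address :=
  (match σ.left with | some γ => {γ} | none => ∅) ∪ ↑σ.right

def Base.addresses (β : Base) : Set Address :=
  {a | ∃ σ ∈ β, a ∈ σ.addresses}

/-- The dual base: each sequent `Γ ⊢ Δ` gives sequents `⊢ Γ` and `δ ⊢` for δ ∈ Δ. -/
noncomputable def Sequent.dualSequents (σ : Sequent) : List Sequent :=
  (match σ.left with
    | some γ => [⟨none, ({γ} : Finset Address)⟩]
    | none => []) ++
    σ.right.toList.map fun δ => ⟨some δ, (∅ : Finset Address)⟩

noncomputable def Base.dual (β : Base) : Base := (β.map Sequent.dualSequents).flatten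

/-- View of a sequence, computed on the reversed sequence (most recent action
first), with fuel. -/
def viewRevAux : ℕ → List Action → List Action
  | 0, _ => []
  | _ + 1, [] => []
  | n + 1, a :: w =>
    if a.isPositive then a :: viewRevAux n w
    else a :: viewRevAux n (w.dropWhile fun b => !(b.justifiesB a))

def viewRev (s : List Action) : List Action := viewRevAux s.length s

/-- The view `⌜s⌝` of a sequence of actions. -/
def view (s : List Action) : List Action := (viewRev s.reverse).reverse

/-- `p` is a path based on `β`. -/
structure IsPath (β : Base) (p : List Action) : Prop where
  alternating : p.Chain' fun a b => a.isPositive ≠ b.isPositive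
  justified : ∀ w a, w ++ [a] <+: p → a ≠ Action.daimon →
    Initial β a ∨ ∃ b ∈ w, b.justifies a
  negJump : ∀ w a b, w ++ [a] <+: p → a.isPositive = true → b ∈ w →
    b.justifies a → b ∈ view w
  posJump : ∀ w a, w ++ [a] <+: p → a.isPositive = true → a ≠ Action.daimon →
    ∀ σ ∈ β, (∃ f, a.focus? = some f ∧ f ∈ σ.right) →
      (w = [] ∧ σ.left = none) ∨
      ∃ w' b, w = w' ++ [b] ∧ b.isPositive = false ∧ σ.owns b
  linearity : (p.filterMap Action.focus?).Nodup
  daimonLast : ∀ w, w ++ [Action.daimon] <+: p → w ++ [Action.daimon] = p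
  daimonFirst : p.head? = some Action.daimon → β.isPositive
  totality : β.isPositive → ∃ a t, p = a :: t ∧
    (a = Action.daimon ∨ (a.isPositive = true ∧ Initial β a))

/-- A chronicle: a non-empty path where each non-initial negative action is
justified by the immediately preceding action. -/
def IsChronicle (β : Base) (c : List Action) : Prop :=
  IsPath β c ∧ c ≠ [] ∧
    ∀ w a b, w ++ [a, b] <+: c → b.isPositive = false →
      Initial β b ∨ a.justifies b

/-- The dual of a positive-ended sequence: reverse all polarities, removing a
final daimon if present and appending one otherwise. -/
def dualSeq (p : List Action) : List Action :=
  if p.getLast? = some Action.daimon then p.dropLast.map Action.dual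
  else p.map Action.dual ++ [Action.daimon]

/-- Positive-ended (possibly empty) sequence. -/
def PosEnded (p : List Action) : Prop :=
  p = [] ∨ ∃ a, p.getLast? = some a ∧ a.isPositive = true

/-- A (non-empty) negative-starting, positive-ended block. -/
def NegBlock (b : List Action) : Prop :=
  b ≠ [] ∧ (∀ a, b.head? = some a → a.isPositive = false) ∧
    ∀ a, b.getLast? = some a → a.isPositive = true

def EndsWithDaimon (p : List Action) : Prop := p.getLast? = some Action.daimon

/-- Basic shuffle of two positive-ended negative paths: interleaving by
positive-ended negative blocks; if the last `p`-block ends with the daimon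
then the last `q`-block is empty. -/
def ShuffleNeg (p q r : List Action) : Prop :=
  ∃ ps qs : List (List Action),
    ps.length = qs.length ∧
    (∀ b ∈ ps, b = [] ∨ NegBlock b) ∧
    (∀ b ∈ qs, b = [] ∨ NegBlock b) ∧
    ps.flatten = p ∧ qs.flatten = q ∧
    (List.zipWith (· ++ ·) ps qs).flatten = r ∧
    (EndsWithDaimon (ps.getLast?.getD []) → qs.getLast?.getD [] = [])

/-- The shuffle `r ∈ p ⧢ q`, including the extensions to two daimon-ended
paths and to paths with a common positive-ended prefix. -/
inductive Shuffle : List Action → List Action → List Action → Prop where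
  | base {p q r} : ShuffleNeg p q r → Shuffle p q r
  | daiLeft {p q r} {κ₁ κ₂ : Action} :
      Shuffle (p ++ [κ₁, Action.daimon]) q r →
      Shuffle (p ++ [κ₁, Action.daimon]) (q ++ [κ₂, Action.daimon]) r
  | daiRight {p q r} {κ₁ κ₂ : Action} :
      Shuffle p (q ++ [κ₂, Action.daimon]) r →
      Shuffle (p ++ [κ₁, Action.daimon]) (q ++ [κ₂, Action.daimon]) r
  | pre {s p q r} : s ≠ [] → PosEnded s → Shuffle p q r →
      Shuffle (s ++ p) (s ++ q) (s ++ r)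

/-- Shuffle closure of a set of (positive-ended) paths. -/
inductive ShuffleClosure (P : Set (List Action)) : List Action → Prop where
  | mem {p} : p ∈ P → ShuffleClosure P p
  | shuffle {p q r} : ShuffleClosure P p → ShuffleClosure P q →
      Shuffle p q r → ShuffleClosure P r

/-- Coherence of chronicles: comparability and propagation. -/
def Coherent (c₁ c₂ : List Action) : Prop :=
  (∀ w κ₁ κ₂, w ++ [κ₁] <+: c₁ → w ++ [κ₂] <+: c₂ →
      κ₁ = κ₂ ∨ (κ₁.isPositive = false ∧ κ₂.isPositive = false)) ∧
  (∀ w ξ₁ I₁ w₁ σ₁ ξ₂ I₂ w₂ σ₂,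
      w ++ Action.proper false ξ₁ I₁ :: w₁ ++ [σ₁] <+: c₁ →
      w ++ Action.proper false ξ₂ I₂ :: w₂ ++ [σ₂] <+: c₂ →
      ξ₁ ≠ ξ₂ → ∀ f, σ₁.focus? = some f → σ₂.focus? ≠ some f)

/-- A design, as a prefix-closed clique of chronicles. -/
structure IsDesign (β : Base) (D : Set (List Action)) : Prop where
  chron : ∀ c ∈ D, IsChronicle β c
  prefixClosed : ∀ c ∈ D, ∀ d, d <+: c → d ≠ [] → d ∈ D
  coherent : ∀ c ∈ D, ∀ d ∈ D, Coherent c d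
  maxPos : ∀ c ∈ D, (∀ κ, c ++ [κ] ∉ D) →
    ∃ a, c.getLast? = some a ∧ a.isPositive = true
  posNonempty : β.isPositive → D.Nonempty

/-- A net of designs, abusively seen as its set of chronicles. -/
structure IsNet (β : Base) (R : Set (List Action)) : Prop where
  chron : ∀ c ∈ R, IsChronicle β c
  prefixClosed : ∀ c ∈ R, ∀ d, d <+: c → d ≠ [] → d ∈ R

/-- `p` is a path of the design/net `D`: each view of each non-empty prefix of
`p` is a chronicle of `D`. -/
def PathOf (β : Base) (D : Set (List Action)) (p : List Action) : Prop :=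
  IsPath β p ∧ ∀ q, q <+: p → q ≠ [] → view q ∈ D

/-- Whose turn it is in normalization: `dpos` says whether the design `D` owns
the first (positive) move; afterwards `D` moves exactly after negative actions. -/
def TurnD (dpos : Prop) (s : List Action) : Prop :=
  match s.getLast? with
  | none => dpos
  | some a => a.isPositive = false

/-- Interaction (normalization) between a design `D` and a counter-net `R`,
described by its visited sequence `s` (seen from `D`): it converges from
state `s` if the design to move plays the daimon, or it plays a proper
positive action accepted (in dual form) by the other one, and the interaction
converges from the extended state. -/
inductive Conv (D R : Set (List Action)) (dpos : Prop) : List Action → Prop where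
  | daiD {s} : TurnD dpos s → view (s ++ [Action.daimon]) ∈ D → Conv D R dpos s
  | daiR {s} : ¬ TurnD dpos s →
      view (s.map Action.dual ++ [Action.daimon]) ∈ R → Conv D R dpos s
  | stepD {s κ} : TurnD dpos s → κ.isPositive = true → κ ≠ Action.daimon →
      view (s ++ [κ]) ∈ D → view ((s ++ [κ]).map Action.dual) ∈ R →
      Conv D R dpos (s ++ [κ]) → Conv D R dpos s
  | stepR {s κ} : ¬ TurnD dpos s → κ.isPositive = false →
      view ((s ++ [κ]).map Action.dual) ∈ R → view (s ++ [κ]) ∈ D →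
      Conv D R dpos (s ++ [κ]) → Conv D R dpos s

/-- The simple base `⊢ ξ` (positive) or `ξ ⊢` (negative). -/
def simpleBase (ξ : Address) (pos : Bool) : Base :=
  if pos then [⟨none, {ξ}⟩] else [⟨some ξ, ∅⟩]

/-- The orthogonal of a set of designs on a simple base. -/
def orthSet (ξ : Address) (pos : Bool) (A : Set (Set (List Action))) :
    Set (Set (List Action)) :=
  {E | IsDesign (simpleBase ξ !pos) E ∧
    ∀ D ∈ A, if pos then Conv D E True [] else Conv E D True []}

def biorth (ξ : Address) (pos : Bool) (A : Set (Set (List Action))) :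
    Set (Set (List Action)) :=
  orthSet ξ (!pos) (orthSet ξ pos A)

/-- A behaviour: a bi-orthogonally closed set of designs on a simple base. -/
structure Behaviour (ξ : Address) (pos : Bool) where
  designs : Set (Set (List Action))
  isDesign : ∀ D ∈ designs, IsDesign (simpleBase ξ pos) D
  closed : designs = biorth ξ pos designs

/-- Visitable paths of a set of designs: traces of convergent normalizations
with the orthogonal, characterized as the dual pairs of paths. -/
def VisitableSet (ξ : Address) (pos : Bool) (S : Set (Set (List Action)))
    (p : List Action) : Prop :=
  ∃ D ∈ S, ∃ E ∈ orthSet ξ pos S,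
    PathOf (simpleBase ξ pos) D p ∧ PathOf (simpleBase ξ !pos) E (dualSeq p)

def Visitable {ξ : Address} {pos : Bool} (A : Behaviour ξ pos)
    (p : List Action) : Prop :=
  VisitableSet ξ pos A.designs p

/-- Material (incarnated) design of a behaviour: inclusion-minimal. -/
def Material {ξ : Address} {pos : Bool} (A : Behaviour ξ pos)
    (D : Set (List Action)) : Prop :=
  D ∈ A.designs ∧ ∀ E ∈ A.designs, E ⊆ D → E = D

/-- Completion of a design: add daimon-ended chronicles after every missing
negative action. -/
def completion (β : Base) (D : Set (List Action)) : Set (List Action) :=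
  D ∪ {c' | ∃ c ∈ D, ∃ ξ I,
    (c' = c ++ [Action.proper false ξ I] ∨
      c' = c ++ [Action.proper false ξ I, Action.daimon]) ∧
    IsChronicle β (c ++ [Action.proper false ξ I, Action.daimon]) ∧
    c ++ [Action.proper false ξ I] ∉ D}

def DaiDesign : Set (List Action) := {[Action.daimon]}

def firstAction (D : Set (List Action)) (κ : Action) : Prop :=
  ∃ c ∈ D, c.head? = some κ

/-- Directory of a set of positive designs on `⊢ ξ`. -/
def directory (ξ : Address) (A : Set (Set (List Action))) : Set (Finset ℕ) :=
  {I | ∃ D ∈ A, firstAction D (Action.proper true ξ I)}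

/-- Alien positive behaviours: ramifications of first actions pairwise disjoint. -/
def Alien (ξ : Address) (A B : Behaviour ξ true) : Prop :=
  ∀ I ∈ directory ξ A.designs, ∀ J ∈ directory ξ B.designs, Disjoint I J

/-- Extension of the first action of a design by a set `J`. -/
def extDesign (ξ : Address) (J : Finset ℕ) (D : Set (List Action)) :
    Set (List Action) :=
  {c | ∃ I t, (Action.proper true ξ I :: t) ∈ D ∧
      c = Action.proper true ξ (I ∪ J) :: t}

/-- The extension `A_[B]` of a set of designs along another. -/
def extended (ξ : Address) (A B : Set (Set (List Action))) :
    Set (Set (List Action)) :=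
  insert DaiDesign
    {D' | ∃ D ∈ A, (∃ I, firstAction D (Action.proper true ξ I)) ∧
      ∃ E ∈ B, ∃ J, firstAction E (Action.proper true ξ J) ∧
        D' = extDesign ξ J D}

/-- The extension `P_[Q]` of a set of paths along another. -/
def extPaths (ξ : Address) (P Q : Set (List Action)) : Set (List Action) :=
  insert [Action.daimon]
    {p | ∃ I t, (Action.proper true ξ I :: t) ∈ P ∧
      ∃ q ∈ Q, ∃ J, q.head? = some (Action.proper true ξ J) ∧
        p = Action.proper true ξ (I ∪ J) :: t}

/-- Prefixing a (negative) design by the positive action `(+, ξ, {i})`. -/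
def shiftD (ξ : Address) (i : ℕ) (D : Set (List Action)) : Set (List Action) :=
  insert [Action.proper true ξ {i}]
    {c | ∃ d ∈ D, c = Action.proper true ξ {i} :: d}

/-- `C = ↑N` : the positive shift of the negative behaviour `N`. -/
def IsShiftOf (ξ : Address) (i : ℕ) (C : Behaviour ξ true)
    (N : Behaviour (ξ ++ [i]) false) : Prop :=
  C.designs = biorth ξ true (shiftD ξ i '' N.designs)

/-- `C = ⊕ₖ F k`. -/
def IsSumOf {ξ : Address} {ι : Type} (C : Behaviour ξ true)
    (F : ι → Behaviour ξ true) : Prop :=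
  C.designs = biorth ξ true (⋃ k, (F k).designs)

/-- Pairwise disjoint family of positive behaviours (disjoint directories). -/
def PairwiseDisjointFam {ξ : Address} {ι : Type}
    (F : ι → Behaviour ξ true) : Prop :=
  ∀ k l, k ≠ l → ∀ I ∈ directory ξ (F k).designs,
    I ∉ directory ξ (F l).designs

open Classical in
/-- Tensor of two positive designs on `⊢ ξ`. -/
noncomputable def tensorD (ξ : Address) (D E : Set (List Action)) :
    Set (List Action) :=
  if D = DaiDesign ∨ E = DaiDesign then DaiDesign
  else {c | ∃ I J, firstAction D (Action.proper true ξ I) ∧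
      firstAction E (Action.proper true ξ J) ∧
      ∃ t, ((Action.proper true ξ I :: t) ∈ D ∨
            (Action.proper true ξ J :: t) ∈ E) ∧
        c = Action.proper true ξ (I ∪ J) :: t}

/-- `C = A ⊗ B`. -/
def IsTensorOf {ξ : Address} (C A B : Behaviour ξ true) : Prop :=
  C.designs = biorth ξ true
    {G | ∃ D ∈ A.designs, ∃ E ∈ B.designs, G = tensorD ξ D E}

/-- Hereditary chains of justifiers inside a sequence `p`. -/
inductive JustChain (β : Base) (p : List Action) : List Action → Prop where
  | init {κ} : κ ∈ p → Initial β κ → JustChain β p [κ]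
  | cons {s κ κ'} : JustChain β p (s ++ [κ]) → κ' ∈ p → κ.justifies κ' →
      JustChain β p (s ++ [κ, κ'])

/-- Trivial chronicle for a behaviour: hereditary-justifier sequence of an
action of a chronicle of a material design. -/
def TrivialChronicle {ξ : Address} {pos : Bool} (A : Behaviour ξ pos)
    (s : List Action) : Prop :=
  ∃ D, Material A D ∧ ∃ c ∈ D, JustChain (simpleBase ξ pos) c s

/-- Regular path for a behaviour: reversible path whose justifier chains are
trivial chronicles for the behaviour. -/
def RegularPath {ξ : Address} {pos : Bool} (A : Behaviour ξ pos)
    (p : List Action) : Prop :=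
  IsPath (simpleBase ξ pos) p ∧ IsPath (simpleBase ξ !pos) (dualSeq p) ∧
  ∀ κ ∈ p, κ ≠ Action.daimon →
    ∃ s, JustChain (simpleBase ξ pos) p s ∧ s.getLast? = some κ ∧
      TrivialChronicle A s

/-- Regular behaviour: every regular path is visitable. -/
def Regular {ξ : Address} {pos : Bool} (A : Behaviour ξ pos) : Prop :=
  ∀ p, RegularPath A p → Visitable A p

/-- Proper actions occurring in a design. -/
def properActs (D : Set (List Action)) : Set Action :=
  {a | a ≠ Action.daimon ∧ ∃ c ∈ D, a ∈ c}

/-- Essentially finite behaviour: finitely many material designs, all finite. -/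
def EssFinite {ξ : Address} {pos : Bool} (A : Behaviour ξ pos) : Prop :=
  {D | Material A D}.Finite ∧ ∀ D, Material A D → (properActs D).Finite

/-- A slice of a design. -/
def IsSlice (D S : Set (List Action)) : Prop :=
  S ⊆ D ∧ (∀ c ∈ S, ∀ d, d <+: c → d ≠ [] → d ∈ S) ∧
  ∀ w ξ I₁ I₂, w ++ [Action.proper false ξ I₁] ∈ S →
    w ++ [Action.proper false ξ I₂] ∈ S → I₁ = I₂

/-- Uniformly bounded behaviour: slice sizes of material designs uniformly
bounded. -/
def UnifBounded {ξ : Address} {pos : Bool} (A : Behaviour ξ pos) : Prop :=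
  ∃ N : ℕ, ∀ D, Material A D → ∀ S, IsSlice D S →
    (properActs S).Finite ∧ (properActs S).ncard < N

def oneDesign (ξ : Address) : Set (List Action) :=
  {[Action.proper true ξ ∅]}

mutual
  /-- The class `C∞⁺` of positive behaviours: `0`, `1`, or a (possibly
  infinite) nonempty sum of finite tensors of shifts of `C∞⁻` elements. -/
  inductive CInf : (ξ : Address) → Behaviour ξ true → Prop where
    | zero {ξ} (A : Behaviour ξ true) :
        A.designs = {DaiDesign} → CInf ξ A
    | one {ξ} (A : Behaviour ξ true) :
        A.designs = biorth ξ true {oneDesign ξ} → CInf ξ A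
    | sum {ξ} {ι : Type} (F : ι → Behaviour ξ true) (C : Behaviour ξ true) :
        Nonempty ι → (∀ k, CInfTS ξ (F k)) → PairwiseDisjointFam F →
        IsSumOf C F → CInf ξ C
  /-- Finite tensors of positive shifts of duals of `C∞⁺` elements. -/
  inductive CInfTS : (ξ : Address) → Behaviour ξ true → Prop where
    | shift {ξ} {i : ℕ} (C : Behaviour ξ true) (N : Behaviour (ξ ++ [i]) false)
        (P : Behaviour (ξ ++ [i]) true) :
        CInf (ξ ++ [i]) P → N.designs = orthSet (ξ ++ [i]) true P.designs →
        IsShiftOf ξ i C N → CInfTS ξ C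
    | tensor {ξ} (A B C : Behaviour ξ true) :
        CInfTS ξ A → CInfTS ξ B → Alien ξ A B → IsTensorOf C A B →
        CInfTS ξ C
end

mutual
  /-- The class `C_f⁺`: as `C∞⁺` but with finite sums only. -/
  inductive CFin : (ξ : Address) → Behaviour ξ true → Prop where
    | zero {ξ} (A : Behaviour ξ true) :
        A.designs = {DaiDesign} → CFin ξ A
    | one {ξ} (A : Behaviour ξ true) :
        A.designs = biorth ξ true {oneDesign ξ} → CFin ξ A
    | sum {ξ} {ι : Type} (F : ι → Behaviour ξ true) (C : Behaviour ξ true) :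
        Nonempty ι → Finite ι → (∀ k, CFinTS ξ (F k)) → PairwiseDisjointFam F →
        IsSumOf C F → CFin ξ C
  inductive CFinTS : (ξ : Address) → Behaviour ξ true → Prop where
    | shift {ξ} {i : ℕ} (C : Behaviour ξ true) (N : Behaviour (ξ ++ [i]) false)
        (P : Behaviour (ξ ++ [i]) true) :
        CFin (ξ ++ [i]) P → N.designs = orthSet (ξ ++ [i]) true P.designs →
        IsShiftOf ξ i C N → CFinTS ξ C
    | tensor {ξ} (A B C : Behaviour ξ true) :
        CFinTS ξ A → CFinTS ξ B → Alien ξ A B → IsTensorOf C A B →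
        CFinTS ξ C
end

/-- The class `C∞⁻` : duals of `C∞⁺` elements. -/
def CInfN (ξ : Address) (B : Behaviour ξ false) : Prop :=
  ∃ A : Behaviour ξ true, CInf ξ A ∧ B.designs = orthSet ξ true A.designs

def CFinN (ξ : Address) (B : Behaviour ξ false) : Prop :=
  ∃ A : Behaviour ξ true, CFin ξ A ∧ B.designs = orthSet ξ true A.designs

/-!
Induction on the length of `p`. If every negative action of `p` is justified by its predecessor,
`p` is its own view, hence a chronicle of `R`. Otherwise write `p = w ++ b :: v` where `b` is the
last negative action not justified by its predecessor. Split `w = s ++ t`, where `s` ends with the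
justifier of `b` (`s = []` when `b` is initial, and then the base is negative). The view of `b`,
and of every later action, skips `t`, so `s ++ b :: v` is still a path of `R`; and `t` and `b :: v`
cut into positive-ended negative blocks, so `p` is a shuffle of the shorter paths `w` and
`s ++ b :: v` over their common prefix `s`.
-/

end Ludics

namespace List

variable {α : Type*}

theorem isChain_or_exists_not_rel (R : α → α → Prop) (l : List α) :
    l.IsChain R ∨ ∃ u a b v, l = u ++ a :: b :: v ∧ ¬ R a b ∧ (b :: v).IsChain R := by
  induction l with
  | nil => exact .inl .nil
  | cons x t ih =>
    rcases ih with ht | ⟨u, a, b, v, rfl, hab, hv⟩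
    · cases t with
      | nil => exact .inl (.singleton x)
      | cons y t =>
        by_cases hxy : R x y
        · exact .inl (ht.cons_cons hxy)
        · exact .inr ⟨[], x, y, t, rfl, hxy, ht⟩
    · exact .inr ⟨x :: u, a, b, v, rfl, hab, hv⟩

theorem prefix_append_cons_cases {s v q : List α} {b : α} (h : q <+: s ++ b :: v) :
    q <+: s ∨ ∃ m, m <+: v ∧ q = s ++ b :: m := by
  rcases le_or_gt q.length s.length with hl | hl
  · exact .inl (prefix_of_prefix_length_le h (prefix_append s _) hl)
  · obtain ⟨r, rfl⟩ := prefix_of_prefix_length_le (prefix_append s _) h hl.le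
    rw [prefix_append_right_inj, prefix_cons_iff] at h
    rcases h with rfl | ⟨m, rfl, hm⟩
    · simp at hl
    · exact .inr ⟨m, hm, rfl⟩

theorem forall_prefix_concat_of_excise {F G : List α → α → Prop} {s t v : List α} {b : α}
    (hF : ∀ w a, w ++ [a] <+: s ++ t ++ b :: v → F w a)
    (hs : ∀ w a, w ++ [a] <+: s → F w a → G w a) (hb : G s b)
    (hv : ∀ m a, m ++ [a] <+: v → F (s ++ t ++ b :: m) a → G (s ++ b :: m) a) :
    ∀ w a, w ++ [a] <+: s ++ b :: v → G w a := by
  intro w a h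
  rcases prefix_append_cons_cases h with h | ⟨m, hm, he⟩
  · exact hs w a h (hF w a (h.trans ⟨t ++ b :: v, by simp⟩))
  rcases eq_nil_or_concat m with rfl | ⟨m, a', rfl⟩
  · obtain ⟨rfl, rfl⟩ := append_singleton_inj.mp he
    exact hb
  · rw [concat_eq_append] at hm
    rw [concat_eq_append, ← cons_append, ← append_assoc, append_singleton_inj] at he
    obtain ⟨rfl, rfl⟩ := he
    refine hv m a hm (hF _ a ?_)
    simpa only [append_assoc, cons_append, prefix_append_right_inj, prefix_cons_inj] using hm

end List

namespace Ludics

lemma Action.ne_daimon_of_isPositive_eq_false {a : Action} (ha : a.isPositive = false) :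
    a ≠ Action.daimon := by
  rintro rfl; simp [Action.isPositive] at ha

lemma viewRevAux_eq_of_length_le {n m : ℕ} {l : List Action} (hn : l.length ≤ n)
    (hm : l.length ≤ m) : viewRevAux n l = viewRevAux m l := by
  induction n generalizing m l with
  | zero => cases l <;> cases m <;> simp_all [viewRevAux]
  | succ n ih =>
    match l, m with
    | [], 0 | [], _ + 1 => rfl
    | _ :: _, 0 => simp at hm
    | a :: w, m + 1 =>
      simp only [List.length_cons, Nat.add_le_add_iff_right] at hn hm
      have hd := (List.dropWhile_sublist (fun b => !b.justifiesB a) (l := w)).length_le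
      simp only [viewRevAux, ih hn hm, ih (hd.trans hn) (hd.trans hm)]

lemma viewRev_cons_of_isPositive {a : Action} (ha : a.isPositive = true) (w : List Action) :
    viewRev (a :: w) = a :: viewRev w := by
  simp [viewRev, viewRevAux, ha]

lemma viewRev_cons_of_not_isPositive {a : Action} (ha : a.isPositive = false)
    (w : List Action) :
    viewRev (a :: w) = a :: viewRev (w.dropWhile fun b => !b.justifiesB a) := by
  simp only [viewRev, List.length_cons, viewRevAux, ha, Bool.false_eq_true, if_false]
  exact congrArg _ (viewRevAux_eq_of_length_le
    ((List.dropWhile_sublist _).length_le) le_rfl)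

lemma view_append_of_isPositive {a : Action} (ha : a.isPositive = true) (w : List Action) :
    view (w ++ [a]) = view w ++ [a] := by
  simp [view, viewRev_cons_of_isPositive ha]

lemma view_append_of_not_isPositive {a : Action} (ha : a.isPositive = false)
    (w : List Action) :
    view (w ++ [a]) = view (w.rdropWhile fun b => !b.justifiesB a) ++ [a] := by
  simp [view, List.rdropWhile, viewRev_cons_of_not_isPositive ha]

lemma view_append_of_justifies {w : List Action} {c a : Action} (hc : w.getLast? = some c)
    (hca : c.justifies a) : view (w ++ [a]) = view w ++ [a] := by
  obtain ⟨w, rfl⟩ := List.getLast?_eq_some_iff.mp hc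
  cases ha : a.isPositive
  · rw [view_append_of_not_isPositive ha,
      List.rdropWhile_concat_neg _ _ _ (by simpa [Action.justifies] using hca)]
  · exact view_append_of_isPositive ha _

lemma getLast?_view (l : List Action) : (view l).getLast? = l.getLast? := by
  induction l using List.reverseRecOn with
  | nil => rfl
  | append_singleton w a _ =>
    cases ha : a.isPositive
    · simp [view_append_of_not_isPositive ha]
    · simp [view_append_of_isPositive ha]

lemma viewRevAux_subset (n : ℕ) (l : List Action) : viewRevAux n l ⊆ l := by
  induction n generalizing l with
  | zero => simp [viewRevAux]
  | succ n ih =>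
    match l with
    | [] => simp [viewRevAux]
    | a :: w =>
      unfold viewRevAux
      split
      · exact List.cons_subset_cons a (ih w)
      · exact List.cons_subset_cons a
          (List.Subset.trans (ih _) (List.dropWhile_sublist _).subset)

lemma view_subset (l : List Action) : view l ⊆ l := fun a ha => by
  simpa using viewRevAux_subset _ _ (List.mem_reverse.mp ha)

def JustifiesIfNeg (a b : Action) : Prop := b.isPositive = false → a.justifies b

lemma view_eq_self_of_isChain {l : List Action} (hl : l.IsChain JustifiesIfNeg) :
    view l = l := by
  induction l using List.reverseRecOn with
  | nil => rfl
  | append_singleton w a ih =>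
    rw [List.isChain_append] at hl
    cases ha : a.isPositive
    · cases hc : w.getLast? with
      | none => simp_all [view, viewRev, viewRevAux]
      | some c => rw [view_append_of_justifies hc (hl.2.2 c hc a rfl ha), ih hl.1]
    · rw [view_append_of_isPositive ha, ih hl.1]

lemma view_append_cons_of_isChain {w m : List Action} {b : Action} (hb : b.isPositive = false)
    (hm : (b :: m).IsChain JustifiesIfNeg) :
    view (w ++ b :: m) = view (w.rdropWhile fun z => !z.justifiesB b) ++ b :: m := by
  induction m using List.reverseRecOn with
  | nil => exact view_append_of_not_isPositive hb w
  | append_singleton m a ih =>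
    rw [← List.cons_append, List.isChain_append] at hm
    have hlast : view (w ++ b :: m ++ [a]) = view (w ++ b :: m) ++ [a] := by
      cases ha : a.isPositive
      · have hc : (b :: m).getLast? = some (m.getLast?.getD b) := List.getLast?_cons
        exact view_append_of_justifies (by rw [List.getLast?_append_cons, hc])
          (hm.2.2 _ hc a rfl ha)
      · exact view_append_of_isPositive ha _
    simpa [ih hm.1] using hlast

lemma IsPath.prefix {β : Base} {p q : List Action} (hp : IsPath β p) (hq : q <+: p)
    (hq₀ : q ≠ []) : IsPath β q := by
  obtain ⟨a, q, rfl⟩ := List.exists_cons_of_ne_nil hq₀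
  refine {
    alternating := hp.alternating.prefix hq
    justified := fun w a h => hp.justified w a (h.trans hq)
    negJump := fun w a b h => hp.negJump w a b (h.trans hq)
    posJump := fun w a h => hp.posJump w a (h.trans hq)
    linearity := hp.linearity.sublist (hq.sublist.filterMap _)
    daimonLast := fun w h => h.eq_of_length
      (le_antisymm h.length_le (hp.daimonLast w (h.trans hq) ▸ hq.length_le))
    daimonFirst := ?_
    totality := ?_ } <;> obtain ⟨r, rfl⟩ := hq
  · exact hp.daimonFirst
  · intro hβ
    obtain ⟨a', t, he, ha⟩ := hp.totality hβ
    obtain ⟨rfl, -⟩ := List.cons.inj he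
    exact ⟨a, q, rfl, ha⟩

lemma PathOf.prefix {β : Base} {R : Set (List Action)} {p q : List Action}
    (hp : PathOf β R p) (hq : q <+: p) (hq₀ : q ≠ []) : PathOf β R q :=
  ⟨hp.1.prefix hq hq₀, fun r hr => hp.2 r (hr.trans hq)⟩

lemma IsPath.head_isPositive_eq_false_iff {β : Base} {a : Action} {t : List Action}
    (hp : IsPath β (a :: t)) : a.isPositive = false ↔ ¬ β.isPositive := by
  refine ⟨fun ha hβ => ?_, fun hβ => ?_⟩
  · obtain ⟨a', t', he, rfl | ⟨hpos, -⟩⟩ := hp.totality hβ <;>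
      obtain ⟨rfl, -⟩ := List.cons.inj he
    · simp [Action.isPositive] at ha
    · simp_all
  · by_contra hpos
    rw [Bool.not_eq_false] at hpos
    have hd : a ≠ Action.daimon := fun hd => hβ (hp.daimonFirst (by simp [hd]))
    obtain ⟨pol, ξ, I, rfl, σ, hσ, ⟨-, hξ⟩ | ⟨rfl, -⟩⟩ :=
      (hp.justified [] a (by simp) hd).resolve_right (by simp)
    · obtain ⟨-, hσl⟩ | ⟨w, b, hw, -⟩ :=
        hp.posJump [] _ (by simp) hpos hd σ hσ ⟨ξ, rfl, hξ⟩
      · exact hβ ⟨σ, hσ, hσl⟩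
      · simp at hw
    · simp [Action.isPositive] at hpos

section Excision

variable {β : Base} {s t v : List Action} {b : Action}

lemma IsPath.justified_excise (hp : IsPath β (s ++ t ++ b :: v))
    (hv : (b :: v).IsChain JustifiesIfNeg)
    (hview : ∀ m, m <+: v → view (s ++ b :: m) = view (s ++ t ++ b :: m))
    (hjust : Initial β b ∨ ∃ j ∈ s, j.justifies b) :
    ∀ w a, w ++ [a] <+: s ++ b :: v → a ≠ Action.daimon →
      Initial β a ∨ ∃ j ∈ w, j.justifies a := by
  refine List.forall_prefix_concat_of_excise hp.justified (fun _ _ _ h => h)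
    (fun _ => hjust) ?_
  rintro m a hm hja ha
  obtain hi | ⟨j, hj, hja⟩ := hja ha
  · exact .inl hi
  cases hpos : a.isPositive
  · -- along `b :: v` negative actions are justified by their predecessor
    have hma : (b :: m ++ [a]).IsChain JustifiesIfNeg := hv.prefix (by simpa using hm)
    have hc : (b :: m).getLast? = some (m.getLast?.getD b) := List.getLast?_cons
    exact .inr ⟨_, List.mem_append_right s (List.mem_of_getLast? hc),
      (List.isChain_append.mp hma).2.2 _ hc a rfl hpos⟩
  · -- positive actions are justified inside the view, which the excision preserves
    have hjv := hp.negJump _ a j (by simpa using hm) hpos hj hja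
    rw [← hview m ((List.prefix_append m [a]).trans hm)] at hjv
    exact .inr ⟨j, view_subset _ hjv, hja⟩

lemma IsPath.posJump_excise (hp : IsPath β (s ++ t ++ b :: v)) (hb : b.isPositive = false) :
    ∀ w a, w ++ [a] <+: s ++ b :: v → a.isPositive = true → a ≠ Action.daimon →
      ∀ σ ∈ β, (∃ f, a.focus? = some f ∧ f ∈ σ.right) →
        (w = [] ∧ σ.left = none) ∨
        ∃ w' b, w = w' ++ [b] ∧ b.isPositive = false ∧ σ.owns b := by
  refine List.forall_prefix_concat_of_excise hp.posJump (fun _ _ _ h => h) (by simp [hb]) ?_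
  rintro m a - hja ha hd σ hσ hf
  obtain ⟨h, -⟩ | ⟨w, b', he, hb', hown⟩ := hja ha hd σ hσ hf
  · simp at h
  · have hl : (s ++ b :: m).getLast? = some b' := by
      rw [List.getLast?_append_cons, ← List.getLast?_append_cons (s ++ t), he,
        List.getLast?_concat]
    obtain ⟨w', he'⟩ := List.getLast?_eq_some_iff.mp hl
    exact .inr ⟨w', b', he', hb', hown⟩

lemma IsPath.excise (hp : IsPath β (s ++ t ++ b :: v)) (hb : b.isPositive = false)
    (hv : (b :: v).IsChain JustifiesIfNeg)
    (hview : ∀ m, m <+: v → view (s ++ b :: m) = view (s ++ t ++ b :: m))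
    (hjust : Initial β b ∨ ∃ j ∈ s, j.justifies b)
    (hs : ∀ y ∈ s.getLast?, y.isPositive = true) (hβ : s = [] → ¬ β.isPositive) :
    IsPath β (s ++ b :: v) := by
  have hbd := Action.ne_daimon_of_isPositive_eq_false hb
  have hsub : List.Sublist (s ++ b :: v) (s ++ t ++ b :: v) := by simp
  refine {
    alternating := ?_
    justified := hp.justified_excise hv hview hjust
    negJump := fun w a j h => List.forall_prefix_concat_of_excise
      (G := fun w a => ∀ j, a.isPositive = true → j ∈ w → j.justifies a → j ∈ view w)
      (fun w a h j => hp.negJump w a j h) (fun _ _ _ h => h) (by simp [hb]) ?_ w a h j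
    posJump := hp.posJump_excise hb
    linearity := hp.linearity.sublist (hsub.filterMap _)
    daimonLast := fun w h => List.forall_prefix_concat_of_excise
      (F := fun w a => a = Action.daimon → w ++ [a] = s ++ t ++ b :: v)
      (G := fun w a => a = Action.daimon → w ++ [a] = s ++ b :: v)
      (fun w a h ha => by subst ha; exact hp.daimonLast w h) ?_ (fun h => absurd h hbd) ?_
      w Action.daimon h rfl
    daimonFirst := ?_
    totality := ?_ }
  · have hpre : s <+: s ++ t ++ b :: v := by simp
    have hsuf : b :: v <:+ s ++ t ++ b :: v := List.suffix_append _ _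
    refine List.isChain_append.mpr ⟨hp.alternating.prefix hpre, hp.alternating.suffix hsuf, ?_⟩
    rintro y hy _ ⟨⟩
    simp [hs y hy, hb]
  · rintro m a hm hja j ha hj hjust
    rw [hview m ((List.prefix_append m [a]).trans hm)]
    exact hja j ha (by simp at hj ⊢; tauto) hjust
  · rintro w a hw hwa rfl
    have h₁ := congrArg List.length (hwa rfl)
    have h₂ := hw.length_le
    simp only [List.length_append, List.length_cons] at h₁ h₂
    omega
  · rintro m a hm hma rfl
    simpa using hma rfl
  · intro hd
    cases s with
    | nil => exact absurd (by simpa using hd) hbd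
    | cons a s => exact hp.daimonFirst (by simpa using hd)
  · intro hβ'
    cases s with
    | nil => exact absurd hβ' (hβ rfl)
    | cons a s =>
      obtain ⟨a', t', he, ha⟩ := hp.totality hβ'
      obtain ⟨rfl, -⟩ := List.cons.inj he
      exact ⟨a, _, rfl, ha⟩

lemma PathOf.excise {R : Set (List Action)} (hp : PathOf β R (s ++ t ++ b :: v))
    (hb : b.isPositive = false) (hv : (b :: v).IsChain JustifiesIfNeg)
    (hview : ∀ m, m <+: v → view (s ++ b :: m) = view (s ++ t ++ b :: m))
    (hjust : Initial β b ∨ ∃ j ∈ s, j.justifies b)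
    (hs : ∀ y ∈ s.getLast?, y.isPositive = true) (hβ : s = [] → ¬ β.isPositive) :
    PathOf β R (s ++ b :: v) := by
  refine ⟨hp.1.excise hb hv hview hjust hs hβ, fun q hq hq₀ => ?_⟩
  rcases List.prefix_append_cons_cases hq with hq | ⟨m, hm, rfl⟩
  · exact hp.2 q (hq.trans (by simp)) hq₀
  · rw [hview m hm]
    exact hp.2 _ (by simpa using hm) (by simp)

end Excision

lemma exists_negBlocks : ∀ {l : List Action},
    l.IsChain (fun a b => a.isPositive ≠ b.isPositive) →
    (∀ a ∈ l.head?, a.isPositive = false) → (∀ a ∈ l.getLast?, a.isPositive = true) →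
    ∃ bs : List (List Action), (∀ x ∈ bs, NegBlock x) ∧ bs.flatten = l
  | [], _, _, _ => ⟨[], by simp, rfl⟩
  | [a], _, hh, hl => by simp_all
  | a :: c :: l, halt, hh, hl => by
    have ha := hh a rfl
    rw [List.isChain_cons_cons] at halt
    have hc : c.isPositive = true := by
      simpa [ha] using halt.1.symm
    obtain ⟨bs, hbs, rfl⟩ := exists_negBlocks halt.2.tail
      (fun d hd => by simpa [hc] using (List.isChain_cons.mp halt.2).1 d hd)
      (fun d hd => hl d (List.mem_getLast?_append_of_mem_getLast? (l₁ := [a, c]) hd))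
    refine ⟨[a, c] :: bs, ?_, rfl⟩
    simp only [List.mem_cons, forall_eq_or_imp]
    exact ⟨⟨by simp, by simpa using ha, by simpa using hc⟩, hbs⟩

lemma shuffleNeg_append {A B : List (List Action)} (hA : ∀ x ∈ A, NegBlock x)
    (hB : ∀ x ∈ B, NegBlock x) : ShuffleNeg A.flatten B.flatten (A.flatten ++ B.flatten) := by
  refine ⟨A ++ B.map fun _ => [], A.map (fun _ => []) ++ B, by simp, ?_, ?_, by simp, by simp,
    ?_, ?_⟩
  · simp only [List.mem_append, List.mem_map]
    rintro x (hx | ⟨_, _, rfl⟩)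
    exacts [.inr (hA x hx), .inl rfl]
  · simp only [List.mem_append, List.mem_map]
    rintro x (⟨_, _, rfl⟩ | hx)
    exacts [.inl rfl, .inr (hB x hx)]
  · rw [List.zipWith_append (by simp), List.zipWith_map_right, List.zipWith_map_left,
      List.zipWith_self, List.zipWith_self]
    simp
  · rcases List.eq_nil_or_concat B with rfl | ⟨B, x, rfl⟩
    · cases A using List.reverseRecOn <;> simp
    · simp [EndsWithDaimon]

lemma shuffle_append_of_posEnded {s t u r : List Action} (hs : PosEnded s)
    (h : ShuffleNeg t u r) : Shuffle (s ++ t) (s ++ u) (s ++ r) := by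
  rcases eq_or_ne s [] with rfl | hs₀
  · exact .base h
  · exact .pre hs₀ hs (.base h)

lemma posEnded_append_cons_iff {s v : List Action} {b : Action} :
    PosEnded (s ++ b :: v) ↔ PosEnded (b :: v) := by
  simp [PosEnded]

section Jump

variable {β : Base} {w : List Action} {b : Action}

lemma IsPath.getLast_rdropWhile_isPositive (h : IsPath β (view (w ++ [b])))
    (hb : b.isPositive = false) :
    ∀ y ∈ (w.rdropWhile fun z => !z.justifiesB b).getLast?, y.isPositive = true := by
  rw [view_append_of_not_isPositive hb] at h
  intro y hy
  simpa [hb] using (List.isChain_append.mp h.alternating).2.2 y (by rwa [getLast?_view]) b rfl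

lemma IsPath.not_isPositive_of_rdropWhile_eq_nil (h : IsPath β (view (w ++ [b])))
    (hb : b.isPositive = false) (hw : (w.rdropWhile fun z => !z.justifiesB b) = []) :
    ¬ β.isPositive := by
  rw [view_append_of_not_isPositive hb, hw] at h
  exact (IsPath.head_isPositive_eq_false_iff (t := []) h).mp hb

lemma PathOf.excise_rtakeWhile {R : Set (List Action)} {v : List Action}
    (hp : PathOf β R (w ++ b :: v)) (hvb : IsPath β (view (w ++ [b])))
    (hb : b.isPositive = false) (hv : (b :: v).IsChain JustifiesIfNeg) :
    PathOf β R ((w.rdropWhile fun z => !z.justifiesB b) ++ b :: v) := by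
  set s := w.rdropWhile fun z => !z.justifiesB b
  set t := w.rtakeWhile fun z => !z.justifiesB b
  have hw : s ++ t = w := List.rdropWhile_append_rtakeWhile
  have hview (m : List Action) (hm : m <+: v) :
      view (s ++ b :: m) = view (s ++ t ++ b :: m) := by
    have hbm := hv.prefix (List.cons_prefix_cons.mpr ⟨rfl, hm⟩)
    rw [hw, view_append_cons_of_isChain hb hbm, view_append_cons_of_isChain hb hbm,
      List.rdropWhile_idempotent]
  rw [← hw] at hp
  refine hp.excise hb hv hview ?_ (hvb.getLast_rdropWhile_isPositive hb)
    (hvb.not_isPositive_of_rdropWhile_eq_nil hb)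
  rcases hp.1.justified (s ++ t) b (by simp) (Action.ne_daimon_of_isPositive_eq_false hb) with
    hi | ⟨j, hj, hjb⟩
  · exact .inl hi
  rcases List.mem_append.mp hj with hj | hj
  · exact .inr ⟨j, hj, hjb⟩
  · exact absurd hjb (by simpa [Action.justifies] using List.mem_rtakeWhile_imp hj)

lemma IsPath.shuffle_excise_rtakeWhile {u v : List Action} {c : Action}
    (hp : IsPath β (u ++ [c] ++ b :: v)) (hvb : IsPath β (view (u ++ [c] ++ [b])))
    (hpe : PosEnded (b :: v)) (hb : b.isPositive = false) (hc : c.isPositive = true)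
    (hcb : ¬ c.justifies b) :
    Shuffle (u ++ [c]) (((u ++ [c]).rdropWhile fun z => !z.justifiesB b) ++ b :: v)
      (u ++ [c] ++ b :: v) := by
  set s := (u ++ [c]).rdropWhile fun z => !z.justifiesB b
  set t := (u ++ [c]).rtakeWhile fun z => !z.justifiesB b
  have hw : s ++ t = u ++ [c] := List.rdropWhile_append_rtakeWhile
  have ht : t = u.rtakeWhile (fun z => !z.justifiesB b) ++ [c] :=
    List.rtakeWhile_concat_pos _ _ _ (by simpa [Action.justifies] using hcb)
  have hs := hvb.getLast_rdropWhile_isPositive hb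
  rw [← hw, List.append_assoc] at hp
  obtain ⟨-, htbv, hst⟩ := List.isChain_append.mp hp.alternating
  obtain ⟨htalt, hbvalt, -⟩ := List.isChain_append.mp htbv
  have hthead : ∀ x ∈ t.head?, x.isPositive = false := by
    intro x hx
    obtain ⟨t', htx⟩ := List.head?_eq_some_iff.mp hx
    cases hsy : s.getLast? with
    | none =>
      rw [List.getLast?_eq_none_iff.mp hsy, htx] at hp
      exact hp.head_isPositive_eq_false_iff.mpr
        (hvb.not_isPositive_of_rdropWhile_eq_nil hb (List.getLast?_eq_none_iff.mp hsy))
    | some y => simpa [hs y hsy] using (hst y hsy x (by simp [htx])).symm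
  obtain ⟨A, hA, hAt⟩ := exists_negBlocks htalt hthead (by simp [ht, hc])
  obtain ⟨B, hB, hBv⟩ := exists_negBlocks hbvalt (by simp [hb])
    (by rcases hpe with h | ⟨a, h, ha⟩ <;> simp_all)
  have hspe : PosEnded s := by
    cases hsy : s.getLast? with
    | none => exact .inl (List.getLast?_eq_none_iff.mp hsy)
    | some y => exact .inr ⟨y, hsy, hs y hsy⟩
  have := shuffle_append_of_posEnded hspe (shuffleNeg_append hA hB)
  rwa [hAt, hBv, ← List.append_assoc, hw] at this

end Jump

lemma shuffleClosure_of_not_justifies {β : Base} {R : Set (List Action)} (hR : IsNet β R)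
    {u v : List Action} {c b : Action} (hp : PathOf β R (u ++ [c] ++ b :: v))
    (hpe : PosEnded (u ++ [c] ++ b :: v)) (hb : b.isPositive = false) (hcb : ¬ c.justifies b)
    (hv : (b :: v).IsChain JustifiesIfNeg)
    (ih : ∀ q : List Action, q.length < (u ++ [c] ++ b :: v).length → q ≠ [] → PosEnded q →
      PathOf β R q → ShuffleClosure R q) :
    ShuffleClosure R (u ++ [c] ++ b :: v) := by
  have hvb : IsPath β (view (u ++ [c] ++ [b])) :=
    (hR.chron _ (hp.2 _ (by simp) (by simp))).1
  have hc : c.isPositive = true := by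
    simpa [hb] using (List.isChain_append.mp hp.1.alternating).2.2 c (by simp) b rfl
  rw [posEnded_append_cons_iff] at hpe
  have hlen := congrArg List.length
    (List.rdropWhile_append_rtakeWhile (p := fun z => !z.justifiesB b) (l := u ++ [c]))
  have ht : (u ++ [c]).rtakeWhile (fun z => !z.justifiesB b) ≠ [] := by
    rw [List.rtakeWhile_concat_pos _ _ _ (by simpa [Action.justifies] using hcb)]
    simp
  refine .shuffle (ih (u ++ [c]) (by simp) (by simp) (.inr ⟨c, by simp, hc⟩)
      (hp.prefix (by simp) (by simp)))
    (ih _ ?_ (by simp) (posEnded_append_cons_iff.mpr hpe) (hp.excise_rtakeWhile hvb hb hv))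
    (hp.1.shuffle_excise_rtakeWhile hvb hpe hb hc hcb)
  have := List.length_pos_of_ne_nil ht
  simp only [List.length_append, List.length_cons] at hlen ⊢
  omega

/-- every non-empty positive-ended path of a net `R` belongs to
the shuffle closure of (the chronicles of) `R`. -/
theorem path_mem_shuffleClosure (β : Base) (R : Set (List Action))
    (hR : IsNet β R) (p : List Action)
    (hne : p ≠ []) (hpe : PosEnded p)
    (hp : PathOf β R p) :
    ShuffleClosure R p := by
  induction hn : p.length using Nat.strong_induction_on generalizing p with
  | _ n ih =>
    subst hn
    rcases List.isChain_or_exists_not_rel JustifiesIfNeg p with hch | ⟨u, c, b, v, rfl, hcb, hv⟩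
    · exact .mem (view_eq_self_of_isChain hch ▸ hp.2 p List.prefix_rfl hne)
    · obtain ⟨hb, hcb⟩ := Classical.not_imp.mp hcb
      rw [show u ++ c :: b :: v = u ++ [c] ++ b :: v by simp] at *
      exact shuffleClosure_of_not_justifies hR hp hpe hb hcb hv fun q hq hq₀ hqe hqp =>
        ih _ hq q hq₀ hqe hqp rfl

end Ludics
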